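/- arXiv:2506.01117 — 3 statements merged into one kernel-verified Lean document; each statement's English description precedes it below -/
import Mathlib

section
/- The greedy network partitioning algorithm is optimal: under the standing assumptions, the greedy partition is a feasible partition, and if the greedy partition has K blocks then every feasible partition of the L layers has at least K blocks; i.e., the greedy partition minimizes the number of blocks among all feasible partitions. -/
open scoped Classical

/-- Feasibility of a contiguous partition of `L` layers with memory footprints `a`
and budget `M`: boundaries `q 0 = 0 < q 1 < ⋯ < q J = L`, and every block sum
`∑_{i = q j}^{q (j+1) - 1} a i` is at most `M`. -/
def IsFeasible (L : ℕ) (M : ℝ) (a : ℕ → ℝ) (J : ℕ) (q : ℕ → ℕ) : Prop :=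
  q 0 = 0 ∧ q J = L ∧ (∀ j, j < J → q j < q (j + 1)) ∧
    ∀ j, j < J → ∑ i ∈ Finset.Ico (q j) (q (j + 1)), a i ≤ M

/-- Greedy boundaries: `p 0 = 0` and `p (k+1)` is the largest `n ≤ L` with
`p k < n` and block sum `∑_{i = p k}^{n-1} a i ≤ M`. -/
noncomputable def greedyBoundary (L : ℕ) (M : ℝ) (a : ℕ → ℝ) : ℕ → ℕ
  | 0 => 0
  | k + 1 =>
      Nat.findGreatest
        (fun n => greedyBoundary L M a k < n ∧
          ∑ i ∈ Finset.Ico (greedyBoundary L M a k) n, a i ≤ M) L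

lemma greedy_step (L : ℕ) (M : ℝ) (a : ℕ → ℝ)
    (ha : ∀ i, i < L → 0 < a i) (haM : ∀ i, i < L → a i ≤ M) (k : ℕ)
    (h : greedyBoundary L M a k < L) :
    greedyBoundary L M a k < greedyBoundary L M a (k + 1) ∧
      ∑ i ∈ Finset.Ico (greedyBoundary L M a k) (greedyBoundary L M a (k + 1)), a i ≤ M := by
  have hw : greedyBoundary L M a k < greedyBoundary L M a k + 1 ∧
      ∑ i ∈ Finset.Ico (greedyBoundary L M a k) (greedyBoundary L M a k + 1), a i ≤ M := by
    refine ⟨Nat.lt_succ_self _, ?_⟩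
    rw [Finset.sum_Ico_succ_top le_rfl, Finset.Ico_self, Finset.sum_empty, zero_add]
    exact haM _ h
  have h1 : greedyBoundary L M a k + 1 ≤ greedyBoundary L M a (k + 1) := by
    rw [greedyBoundary]
    exact Nat.le_findGreatest h hw
  have h2 := Nat.findGreatest_spec (n := L)
    (P := fun n => greedyBoundary L M a k < n ∧
      ∑ i ∈ Finset.Ico (greedyBoundary L M a k) n, a i ≤ M) h hw
  rw [greedyBoundary]
  exact h2

/-- **Optimality of greedy network partitioning.**  Under the standing assumptions
(`0 < M`, `0 < a i ≤ M` for all layers `i < L`), if the greedy procedure terminates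
at the first `K` with `p K = L`, then the greedy partition is feasible, and every
feasible partition of the `L` layers has at least `K` blocks. -/
theorem greedy_partition_optimal (L : ℕ) (M : ℝ) (hM : 0 < M) (a : ℕ → ℝ)
    (ha : ∀ i, i < L → 0 < a i) (haM : ∀ i, i < L → a i ≤ M)
    (K : ℕ) (hK : greedyBoundary L M a K = L)
    (hKfirst : ∀ k, k < K → greedyBoundary L M a k ≠ L) :
    IsFeasible L M a K (greedyBoundary L M a) ∧
      ∀ (J : ℕ) (q : ℕ → ℕ), IsFeasible L M a J q → K ≤ J := by
  have hle : ∀ k, greedyBoundary L M a k ≤ L := by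
    intro k
    cases k with
    | zero => simp [greedyBoundary]
    | succ k => rw [greedyBoundary]; exact Nat.findGreatest_le L
  have hlt : ∀ k, k < K → greedyBoundary L M a k < L :=
    fun k hk => lt_of_le_of_ne (hle k) (hKfirst k hk)
  have hstep := fun k hk => greedy_step L M a ha haM k (hlt k hk)
  constructor
  · exact ⟨rfl, hK, fun j hj => (hstep j hj).1, fun j hj => (hstep j hj).2⟩
  · intro J q hq
    by_contra hJK
    push_neg at hJK
    obtain ⟨hq0, hqJ, hqmono, hqsum⟩ := hq
    have hqmono' : ∀ l k, k ≤ l → l ≤ J → q k ≤ q l := by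
      intro l
      induction l with
      | zero => intro k hk _; rw [Nat.le_zero.mp hk]
      | succ l ih =>
        intro k hk hlJ
        rcases Nat.lt_or_ge k (l + 1) with h | h
        · exact le_trans (ih k (by omega) (by omega)) (le_of_lt (hqmono l (by omega)))
        · have : k = l + 1 := by omega
          rw [this]
    have hqle : ∀ k, k ≤ J → q k ≤ L := by
      intro k hk
      have := hqmono' J k hk le_rfl
      omega
    have main : ∀ k, k ≤ J → q k ≤ greedyBoundary L M a k := by
      intro k
      induction k with
      | zero => intro _; simp [hq0, greedyBoundary]
      | succ k ih =>
        intro hk1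
        have hk : k < J := hk1
        have hkK : k < K := hk.trans hJK
        have hqk := ih (le_of_lt hk)
        by_cases hc : q (k + 1) ≤ greedyBoundary L M a k
        · exact le_trans hc (le_of_lt (hstep k hkK).1)
        · push_neg at hc
          have hsum : ∑ i ∈ Finset.Ico (greedyBoundary L M a k) (q (k + 1)), a i ≤ M := by
            have hsub : Finset.Ico (greedyBoundary L M a k) (q (k + 1)) ⊆
                Finset.Ico (q k) (q (k + 1)) := Finset.Ico_subset_Ico hqk le_rfl
            refine le_trans (Finset.sum_le_sum_of_subset_of_nonneg hsub ?_) (hqsum k hk)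
            intro i hi _
            have : i < L := lt_of_lt_of_le (Finset.mem_Ico.mp hi).2 (hqle (k + 1) hk1)
            exact le_of_lt (ha i this)
          rw [greedyBoundary]
          exact Nat.le_findGreatest (hqle (k + 1) hk1) ⟨hc, hsum⟩
    have h1 := main J le_rfl
    rw [hqJ] at h1
    have h2 : greedyBoundary L M a J < L := hlt J hJK
    omega
end

section
/- The greedy partition stays ahead of every feasible partition: under the standing assumptions, if 0 = q_0 < q_1 < ⋯ < q_J = L are the boundaries of any feasible partition and 0 = p_0 < p_1 < ⋯ < p_K = L are the greedy boundaries, then for every index k ≤ min(K, J) one has p_k ≥ q_k. -/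
open scoped Classical

lemma greedyBoundary_le (L : ℕ) (M : ℝ) (a : ℕ → ℝ) : ∀ k, greedyBoundary L M a k ≤ L
  | 0 => Nat.zero_le L
  | k + 1 => Nat.findGreatest_le L

/-- **The greedy partition stays ahead of every feasible partition.**  If
`0 = q 0 < q 1 < ⋯ < q J = L` is any feasible partition and
`0 = p 0 < p 1 < ⋯ < p K = L` are the greedy boundaries (with `K` the first index
reaching `L`), then `q k ≤ p k` for every `k ≤ min K J`. -/
theorem greedy_stays_ahead (L : ℕ) (M : ℝ) (hM : 0 < M) (a : ℕ → ℝ)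
    (ha : ∀ i, i < L → 0 < a i) (haM : ∀ i, i < L → a i ≤ M)
    (J : ℕ) (q : ℕ → ℕ) (hq : IsFeasible L M a J q)
    (K : ℕ) (hK : greedyBoundary L M a K = L)
    (hKfirst : ∀ k, k < K → greedyBoundary L M a k ≠ L) :
    ∀ k, k ≤ min K J → q k ≤ greedyBoundary L M a k := by
  obtain ⟨hq0, hqJ, hqmono, hqsum⟩ := hq
  have hmono : ∀ m n, m ≤ n → n ≤ J → q m ≤ q n := by
    intro m n hmn hnJ
    induction n with
    | zero => interval_cases m; exact le_refl _
    | succ n ih =>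
      rcases Nat.lt_or_ge m (n + 1) with h | h
      · exact (ih (by omega) (by omega)).trans (hqmono n (by omega)).le
      · have : m = n + 1 := by omega
        subst this; exact le_refl _
  intro k hk
  induction k with
  | zero => simp [hq0, greedyBoundary]
  | succ k ih =>
    have ihk := ih (by omega)
    set p := greedyBoundary L M a with hp
    have hpk_lt : p k < L :=
      lt_of_le_of_ne (greedyBoundary_le L M a k) (hKfirst k (by omega))
    have hunfold : p (k + 1) =
        Nat.findGreatest
          (fun n => p k < n ∧ ∑ i ∈ Finset.Ico (p k) n, a i ≤ M) L := by
      rw [hp]; rfl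
    have hbase : p k < p k + 1 ∧ ∑ i ∈ Finset.Ico (p k) (p k + 1), a i ≤ M := by
      constructor
      · omega
      · rw [Nat.Ico_succ_singleton, Finset.sum_singleton]
        exact haM _ hpk_lt
    have hge : p k + 1 ≤ p (k + 1) := by
      rw [hunfold]
      exact Nat.le_findGreatest (by omega) hbase
    by_cases hc : q (k + 1) ≤ p k
    · omega
    · push_neg at hc
      have hqk1L : q (k + 1) ≤ L := hqJ ▸ hmono (k + 1) J (by omega) (le_refl _)
      have hsub : Finset.Ico (p k) (q (k + 1)) ⊆ Finset.Ico (q k) (q (k + 1)) :=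
        Finset.Ico_subset_Ico ihk (le_refl _)
      have hsum : ∑ i ∈ Finset.Ico (p k) (q (k + 1)), a i ≤
          ∑ i ∈ Finset.Ico (q k) (q (k + 1)), a i :=
        Finset.sum_le_sum_of_subset_of_nonneg hsub (fun i hi _ =>
          (ha i (lt_of_lt_of_le (Finset.mem_Ico.1 hi).2 hqk1L)).le)
      have hM' : ∑ i ∈ Finset.Ico (p k) (q (k + 1)), a i ≤ M :=
        hsum.trans (hqsum k (by omega))
      rw [hunfold]
      exact Nat.le_findGreatest hqk1L ⟨hc, hM'⟩
end

section
/- Exchange step of the greedy optimality proof: under the standing assumptions, let 0 = q_0 < q_1 < ⋯ < q_J = L be a feasible partition, let 0 = p_0 < p_1 < ⋯ < p_K = L be the greedy boundaries, and suppose for some r with r + 1 ≤ min(K, J) that q_j = p_j for all j ≤ r and q_{r+1} < p_{r+1}. Then the boundary sequence obtained from (q_j) by replacing q_{r+1} with p_{r+1} and deleting every subsequent boundary q_j with q_j ≤ p_{r+1} is again a strictly increasing sequence from 0 to L that is feasible, and it has at most J blocks. -/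
open scoped Classical

/-- **Exchange step of the greedy optimality proof.**  Let `q` be a feasible partition
with `J` blocks and `p` the greedy boundaries (terminating first at `p K = L`).
Suppose `q j = p j` for all `j ≤ r` but `q (r+1) < p (r+1)`, where `r + 1 ≤ min K J`.
Replacing `q (r+1)` by `p (r+1)` and deleting every subsequent boundary `q j` with
`q j ≤ p (r+1)` (there are `d` of them) yields again a strictly increasing boundary
sequence from `0` to `L` that is feasible, with `J - d ≤ J` blocks. -/
theorem greedy_exchange_step (L : ℕ) (M : ℝ) (hM : 0 < M) (a : ℕ → ℝ)
    (ha : ∀ i, i < L → 0 < a i) (haM : ∀ i, i < L → a i ≤ M)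
    (J : ℕ) (q : ℕ → ℕ) (hq : IsFeasible L M a J q)
    (K : ℕ) (hK : greedyBoundary L M a K = L)
    (hKfirst : ∀ k, k < K → greedyBoundary L M a k ≠ L)
    (r : ℕ) (hr : r + 1 ≤ min K J)
    (heq : ∀ j, j ≤ r → q j = greedyBoundary L M a j)
    (hlt : q (r + 1) < greedyBoundary L M a (r + 1)) :
    let p := greedyBoundary L M a
    let d := ((Finset.Icc (r + 2) J).filter (fun j => q j ≤ p (r + 1))).card
    let q' : ℕ → ℕ := fun j =>
      if j ≤ r then q j else if j = r + 1 then p (r + 1) else q (j + d)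
    IsFeasible L M a (J - d) q' ∧ J - d ≤ J := by
  intro p d q'
  obtain ⟨hq0, hqJ, hqmono, hqsum⟩ := hq
  have hrJ : r + 1 ≤ J := le_trans hr (min_le_right _ _)
  -- monotonicity of q on [0, J]
  have qmono : ∀ i j, i ≤ j → j ≤ J → q i ≤ q j := by
    intro i j
    induction j with
    | zero => intro hi _; simp [Nat.le_zero.mp hi]
    | succ n ih =>
      intro hi hjJ
      rcases Nat.eq_or_lt_of_le hi with h | h
      · exact h ▸ le_rfl
      · exact le_trans (ih (by omega) (by omega)) (le_of_lt (hqmono n (by omega)))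
  have qstrict : ∀ i j, i < j → j ≤ J → q i < q j := by
    intro i j hij hjJ
    have h1 : q i < q (i + 1) := hqmono i (lt_of_lt_of_le hij hjJ)
    exact lt_of_lt_of_le h1 (qmono (i + 1) j hij hjJ)
  have hqL : ∀ j, j ≤ J → q j ≤ L := fun j hj => hqJ ▸ qmono j J hj le_rfl
  -- greedy boundary p (r+1)
  have hpr : greedyBoundary L M a r = q r := (heq r le_rfl).symm
  have hp1 : p (r + 1) = Nat.findGreatest
      (fun n => q r < n ∧ ∑ i ∈ Finset.Ico (q r) n, a i ≤ M) L := by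
    show greedyBoundary L M a (r + 1) = _
    rw [greedyBoundary, hpr]
  have hwit : q r < q (r + 1) ∧ ∑ i ∈ Finset.Ico (q r) (q (r + 1)), a i ≤ M :=
    ⟨qstrict r (r + 1) (Nat.lt_succ_self r) hrJ, hqsum r (Nat.lt_of_succ_le hrJ)⟩
  have hpL : p (r + 1) ≤ L := by rw [hp1]; exact Nat.findGreatest_le L
  have hspec : q r < p (r + 1) ∧ ∑ i ∈ Finset.Ico (q r) (p (r + 1)), a i ≤ M := by
    rw [hp1]
    exact Nat.findGreatest_spec (P := fun n => q r < n ∧ ∑ i ∈ Finset.Ico (q r) n, a i ≤ M) (hqL (r + 1) hrJ) hwit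
  -- r + 2 ≤ J
  have hr2J : r + 2 ≤ J := by
    have h1 : q (r + 1) < L := lt_of_lt_of_le hlt hpL
    by_contra h
    have h2 : r + 1 = J := by omega
    rw [h2, hqJ] at h1
    omega
  -- notation for the deleted set
  set S := (Finset.Icc (r + 2) J).filter (fun j => q j ≤ p (r + 1)) with hS
  have hdcard : d = S.card := rfl
  have hdle : d ≤ J - r - 1 := by
    rw [hdcard]
    calc S.card ≤ (Finset.Icc (r + 2) J).card := Finset.card_filter_le _ _
    _ = J - r - 1 := by rw [Nat.card_Icc]; omega
  -- Claim A : q (r + 1 + d) ≤ p (r + 1)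
  have claimA : q (r + 1 + d) ≤ p (r + 1) := by
    rcases Nat.eq_zero_or_pos d with hd0 | hdpos
    · simpa [hd0] using le_of_lt (lt_of_lt_of_le hlt (le_of_eq rfl))
    · by_contra h
      push_neg at h
      have hsub : S ⊆ Finset.Icc (r + 2) (r + d) := by
        intro j hj
        rw [hS, Finset.mem_filter, Finset.mem_Icc] at hj
        rw [Finset.mem_Icc]
        refine ⟨hj.1.1, ?_⟩
        by_contra hjb
        push_neg at hjb
        have : q (r + 1 + d) ≤ q j := qmono _ _ (by omega) hj.1.2
        omega
      have := Finset.card_le_card hsub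
      rw [Nat.card_Icc] at this
      omega
  -- Claim B : if r + 2 + d ≤ J then p (r + 1) < q (r + 2 + d)
  have claimB : r + 2 + d ≤ J → p (r + 1) < q (r + 2 + d) := by
    intro hle
    by_contra h
    push_neg at h
    have hsub : Finset.Icc (r + 2) (r + 2 + d) ⊆ S := by
      intro j hj
      rw [Finset.mem_Icc] at hj
      rw [hS, Finset.mem_filter, Finset.mem_Icc]
      exact ⟨⟨hj.1, le_trans hj.2 hle⟩,
        le_trans (qmono _ _ hj.2 hle) h⟩
    have := Finset.card_le_card hsub
    rw [Nat.card_Icc] at this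
    omega
  -- last boundary
  have hlast : q' (J - d) = L := by
    rcases lt_or_eq_of_le hpL with hcase | hcase
    · -- p (r+1) < L : then d ≤ J - r - 2
      have hd2 : d ≤ J - r - 2 := by
        have hsub : S ⊆ Finset.Icc (r + 2) (J - 1) := by
          intro j hj
          rw [hS, Finset.mem_filter, Finset.mem_Icc] at hj
          rw [Finset.mem_Icc]
          refine ⟨hj.1.1, ?_⟩
          by_contra hjb
          have : j = J := by omega
          rw [this, hqJ] at hj
          omega
        have := Finset.card_le_card hsub
        rw [Nat.card_Icc] at this
        rw [hdcard]
        omega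
      have h1 : ¬ J - d ≤ r := by omega
      have h2 : ¬ J - d = r + 1 := by omega
      show (if J - d ≤ r then q (J - d) else if J - d = r + 1 then p (r + 1)
        else q (J - d + d)) = L
      rw [if_neg h1, if_neg h2]
      have : J - d + d = J := by omega
      rw [this, hqJ]
    · -- p (r+1) = L : then S = Icc, d = J - r - 1, J - d = r + 1
      have hSeq : S = Finset.Icc (r + 2) J := by
        rw [hS]
        apply Finset.filter_true_of_mem
        intro j hj
        rw [Finset.mem_Icc] at hj
        show q j ≤ p (r + 1)
        rw [hcase]
        exact hqL j hj.2
      have hd : d = J - r - 1 := by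
        rw [hdcard, hSeq, Nat.card_Icc]; omega
      have hJd : J - d = r + 1 := by omega
      show (if J - d ≤ r then q (J - d) else if J - d = r + 1 then p (r + 1)
        else q (J - d + d)) = L
      rw [if_neg (by omega), if_pos hJd, hcase]
  -- values of q' in each regime
  have hq'le : ∀ j, j ≤ r → q' j = q j := by
    intro j hj; show (if j ≤ r then _ else _) = _; rw [if_pos hj]
  have hq'r1 : q' (r + 1) = p (r + 1) := by
    show (if r + 1 ≤ r then _ else _) = _
    rw [if_neg (by omega), if_pos rfl]
  have hq'gt : ∀ j, r + 2 ≤ j → q' j = q (j + d) := by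
    intro j hj
    show (if j ≤ r then _ else _) = _
    rw [if_neg (by omega), if_neg (by omega)]
  have hddle : d ≤ J := by omega
  refine ⟨⟨?_, hlast, ?_, ?_⟩, Nat.sub_le _ _⟩
  · rw [hq'le 0 (Nat.zero_le r)]; exact hq0
  · -- strictly increasing
    intro j hjlt
    have hjJ : j + 1 ≤ J - d := hjlt
    rcases lt_trichotomy j r with hc | hc | hc
    · rw [hq'le j (le_of_lt hc), hq'le (j + 1) hc]
      exact hqmono j (by omega)
    · subst hc
      rw [hq'le j le_rfl, hq'r1]
      exact lt_trans (qstrict j (j + 1) (Nat.lt_succ_self j) hrJ) hlt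
    · rcases Nat.eq_or_lt_of_le (Nat.succ_le_of_lt hc) with hc2 | hc2
      · rw [← hc2, hq'r1, hq'gt (r + 2) le_rfl]
        exact claimB (by omega)
      · rw [hq'gt j hc2, hq'gt (j + 1) (by omega)]
        exact qstrict (j + d) (j + 1 + d) (by omega) (by omega)
  · -- block sums
    intro j hjlt
    have hjJ : j + 1 ≤ J - d := hjlt
    rcases lt_trichotomy j r with hc | hc | hc
    · rw [hq'le j (le_of_lt hc), hq'le (j + 1) hc]
      exact hqsum j (by omega)
    · subst hc
      rw [hq'le j le_rfl, hq'r1]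
      exact hspec.2
    · rcases Nat.eq_or_lt_of_le (Nat.succ_le_of_lt hc) with hc2 | hc2
      · rw [← hc2, hq'r1, hq'gt (r + 2) le_rfl]
        have hin : r + 2 + d ≤ J := by omega
        have hsub : Finset.Ico (p (r + 1)) (q (r + 2 + d)) ⊆
            Finset.Ico (q (r + 1 + d)) (q (r + 2 + d)) := by
          apply Finset.Ico_subset_Ico claimA le_rfl
        calc ∑ i ∈ Finset.Ico (p (r + 1)) (q (r + 2 + d)), a i
            ≤ ∑ i ∈ Finset.Ico (q (r + 1 + d)) (q (r + 2 + d)), a i := by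
              apply Finset.sum_le_sum_of_subset_of_nonneg hsub
              intro i hi _
              rw [Finset.mem_Ico] at hi
              have : i < L := lt_of_lt_of_le hi.2 (hqL _ hin)
              exact le_of_lt (ha i this)
          _ ≤ M := by
              have := hqsum (r + 1 + d) (by omega)
              have heq2 : r + 1 + d + 1 = r + 2 + d := by omega
              rwa [heq2] at this
      · rw [hq'gt j hc2, hq'gt (j + 1) (by omega)]
        have heq2 : j + d + 1 = j + 1 + d := by omega
        have := hqsum (j + d) (by omega)
        rwa [heq2] at this
end
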